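/- arXiv:2201.08112 — 6 statements merged into one kernel-verified Lean document; each statement's English description precedes it below -/
import Mathlib

section
/- For any Boolean function ψ over n variables, the models of the disjunction over all variables X of the resolvent res_X(ψ) := ψ⁻_X ∨ ψ⁺_X are exactly the interpretations at Hamming distance at most 1 from some model of ψ; i.e., G^1(ψ) ≡ ⋁_{X} res_X(ψ) (when n ≥ 1). -/
/-- The resolvent of `ψ` with respect to variable `X`. -/
def res {n : ℕ} (X : Fin n) (ψ : (Fin n → Bool) → Bool) : (Fin n → Bool) → Bool :=
  fun w => ψ (Function.update w X false) || ψ (Function.update w X true)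

theorem G1_eq_disj_resolvents {n : ℕ} (hn : 1 ≤ n) (ψ : (Fin n → Bool) → Bool) :
    ∀ w : Fin n → Bool,
      (∃ w', ψ w' = true ∧ hammingDist w w' ≤ 1) ↔
        ∃ X : Fin n, res X ψ w = true := by
  intro w
  constructor
  · rintro ⟨w', hw', hd⟩
    by_cases h : w = w'
    · obtain ⟨X⟩ := Fin.pos_iff_nonempty.mp hn
      refine ⟨X, ?_⟩
      subst h
      simp only [res, Bool.or_eq_true]
      cases hb : w X
      · left
        have he : Function.update w X false = w := by
          rw [← hb]; exact Function.update_eq_self X w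
        rw [he, hw']
      · right
        have he : Function.update w X true = w := by
          rw [← hb]; exact Function.update_eq_self X w
        rw [he, hw']
    · -- there is exactly one differing coordinate
      have hpos : 0 < hammingDist w w' :=
        Nat.pos_of_ne_zero fun hc => h (hammingDist_eq_zero.mp hc)
      have h1 : hammingDist w w' = 1 := le_antisymm hd hpos
      -- extract the unique differing index
      unfold hammingDist at h1
      obtain ⟨X, hX⟩ := Finset.card_eq_one.mp h1
      have hXmem : X ∈ Finset.univ.filter fun i => w i ≠ w' i := by
        rw [hX]; exact Finset.mem_singleton_self X
      have hXne : w X ≠ w' X := (Finset.mem_filter.mp hXmem).2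
      refine ⟨X, ?_⟩
      have hupd : Function.update w X (w' X) = w' := by
        funext i
        by_cases hi : i = X
        · subst hi; simp
        · rw [Function.update_of_ne hi]
          by_contra hc
          have : i ∈ Finset.univ.filter fun j => w j ≠ w' j :=
            Finset.mem_filter.mpr ⟨Finset.mem_univ i, hc⟩
          rw [hX, Finset.mem_singleton] at this
          exact hi this
      simp only [res, Bool.or_eq_true]
      cases hb : w' X
      · left
        have he : Function.update w X false = w' := by rw [← hb]; exact hupd
        rw [he, hw']
      · right
        have he : Function.update w X true = w' := by rw [← hb]; exact hupd
        rw [he, hw']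
  · rintro ⟨X, hX⟩
    simp only [res, Bool.or_eq_true] at hX
    have key : ∀ b : Bool, ψ (Function.update w X b) = true →
        ∃ w', ψ w' = true ∧ hammingDist w w' ≤ 1 := by
      intro b hb
      refine ⟨Function.update w X b, hb, ?_⟩
      unfold hammingDist
      calc (Finset.univ.filter fun i => w i ≠ Function.update w X b i).card
          ≤ ({X} : Finset (Fin n)).card := by
            apply Finset.card_le_card
            intro i hi
            rw [Finset.mem_filter] at hi
            rw [Finset.mem_singleton]
            by_contra hc
            exact hi.2 (by rw [Function.update_of_ne hc])
        _ = 1 := Finset.card_singleton X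
    cases hX with
    | inl h => exact key false h
    | inr h => exact key true h
end

section
/- For any Boolean function ψ over n ≥ ℓ variables, G^ℓ(ψ) is logically equivalent to the disjunction, over all choices of ℓ distinct variables X₁,…,X_ℓ and all sign vectors σ ∈ {+,−}^ℓ, of the ℓ-th order semi-resolvents ψ^σ_{X₁,…,X_ℓ} obtained by instantiating each Xᵢ to true if σ(i)=+ and to false otherwise. -/
/-- The ℓ-th order semi-resolvent of `ψ`, obtained by instantiating the distinct
variables `X 0, …, X (ℓ-1)` to the constants `σ 0, …, σ (ℓ-1)`. -/
noncomputable def semiRes {n ℓ : ℕ} (ψ : (Fin n → Bool) → Bool) (X : Fin ℓ → Fin n)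
    (σ : Fin ℓ → Bool) : (Fin n → Bool) → Bool :=
  fun w => ψ (fun i => if h : ∃ j, X j = i then σ h.choose else w i)

theorem G_eq_disj_semiresolvents {n ℓ : ℕ} (h1 : 1 ≤ ℓ) (h2 : ℓ ≤ n)
    (ψ : (Fin n → Bool) → Bool) :
    ∀ w : Fin n → Bool,
      (∃ w', ψ w' = true ∧ hammingDist w w' ≤ ℓ) ↔
        ∃ X : Fin ℓ → Fin n, Function.Injective X ∧
          ∃ σ : Fin ℓ → Bool, semiRes ψ X σ w = true := by
  intro w
  constructor
  · rintro ⟨w', hψ, hd⟩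
    set D : Finset (Fin n) := Finset.univ.filter (fun i => w i ≠ w' i) with hD
    have hDcard : D.card ≤ ℓ := by
      have hh : hammingDist w w' = D.card := by
        simp [hammingDist, hD]
      omega
    obtain ⟨S, hDS, hScard⟩ :=
      Finset.exists_superset_card_eq hDcard (by simpa using h2)
    let e := S.orderIsoOfFin hScard
    refine ⟨fun j => (e j : Fin n), ?_, fun j => w' (e j), ?_⟩
    · intro a b hab
      exact e.injective (Subtype.ext hab)
    · have hw' : (fun i => if h : ∃ j, ((e j : Fin n)) = i then
          w' (e h.choose) else w i) = w' := by
        funext i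
        by_cases h : ∃ j, ((e j : Fin n)) = i
        · rw [dif_pos h, h.choose_spec]
        · rw [dif_neg h]
          by_contra hne
          have hiD : i ∈ D := by simp [hD, hne]
          have hiS : i ∈ S := hDS hiD
          exact h ⟨e.symm ⟨i, hiS⟩, by simp⟩
      simpa [semiRes, hw'] using hψ
  · rintro ⟨X, hX, σ, hσ⟩
    refine ⟨fun i => if h : ∃ j, X j = i then σ h.choose else w i, hσ, ?_⟩
    have hsub : (Finset.univ.filter
        (fun i => w i ≠ (if h : ∃ j, X j = i then σ h.choose else w i)))
        ⊆ Finset.univ.image X := by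
      intro i hi
      simp only [Finset.mem_filter, Finset.mem_univ, true_and] at hi
      by_cases h : ∃ j, X j = i
      · obtain ⟨j, hj⟩ := h
        exact Finset.mem_image.mpr ⟨j, Finset.mem_univ j, hj⟩
      · simp [dif_neg h] at hi
    calc hammingDist w _ = _ := by simp [hammingDist]
      _ ≤ (Finset.univ.image X).card := Finset.card_le_card hsub
      _ ≤ (Finset.univ : Finset (Fin ℓ)).card := Finset.card_image_le
      _ = ℓ := by simp
end

section
/- Dalal revision satisfies postulate R3: if ψ and μ are both satisfiable, then ψ ∘ μ is satisfiable. -/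
open scoped Classical

/-- The ℓ-th relaxation operator (at the level of models). -/
def G {n : ℕ} (ℓ : ℕ) (ψ : (Fin n → Bool) → Prop) : (Fin n → Bool) → Prop :=
  fun w => ∃ w', ψ w' ∧ hammingDist w w' ≤ ℓ

/-- The order of Dalal revision: the least ℓ ≥ 1 such that `G ℓ ψ ∧ μ` is satisfiable. -/
noncomputable def revOrder {n : ℕ} (ψ μ : (Fin n → Bool) → Prop) : ℕ :=
  sInf {ℓ | 1 ≤ ℓ ∧ ∃ w, G ℓ ψ w ∧ μ w}

/-- Dalal revision of `ψ` by `μ`. -/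
noncomputable def revise {n : ℕ} (ψ μ : (Fin n → Bool) → Prop) : (Fin n → Bool) → Prop :=
  if ∃ w, ψ w ∧ μ w then fun w => ψ w ∧ μ w
  else fun w => G (revOrder ψ μ) ψ w ∧ μ w

theorem dalal_R3 {n : ℕ} (ψ μ : (Fin n → Bool) → Prop)
    (hψ : ∃ w, ψ w) (hμ : ∃ w, μ w) :
    ∃ w : Fin n → Bool, revise ψ μ w := by
  obtain ⟨u, hu⟩ := hψ
  obtain ⟨v, hv⟩ := hμ
  unfold revise
  split_ifs with h
  · exact h
  · have hmem : (n + 1) ∈ {ℓ | 1 ≤ ℓ ∧ ∃ w, G ℓ ψ w ∧ μ w} := by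
      refine ⟨Nat.le_add_left 1 n, v, ⟨u, hu, ?_⟩, hv⟩
      calc hammingDist v u ≤ Fintype.card (Fin n) := hammingDist_le_card_fintype
        _ ≤ n + 1 := by simp
    have := Nat.sInf_mem ⟨n + 1, hmem⟩
    exact this.2
end

section
/- Dalal revision satisfies postulate R2 by construction, and moreover its models are exactly the models of μ at minimal Hamming distance from mod(ψ): mod(ψ ∘ μ) = {w ∈ mod(μ) | dist(w, mod(ψ)) = min_{w' ∈ mod(μ)} dist(w', mod(ψ))}, where dist(w, A) = min_{a ∈ A} Δ(w,a). -/
open scoped Classical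

/-- Distance from an interpretation to the set of models of a formula. -/
noncomputable def distTo {n : ℕ} (w : Fin n → Bool) (ψ : (Fin n → Bool) → Prop) : ℕ :=
  sInf {d | ∃ a, ψ a ∧ hammingDist w a = d}

theorem dalal_R2_and_minimality {n : ℕ} (ψ μ : (Fin n → Bool) → Prop)
    (hψ : ∃ w, ψ w) (hμ : ∃ w, μ w) :
    ((∃ w, ψ w ∧ μ w) → ∀ w, revise ψ μ w ↔ ψ w ∧ μ w) ∧
      (∀ w : Fin n → Bool,
        revise ψ μ w ↔
          μ w ∧ distTo w ψ = sInf {d | ∃ w', μ w' ∧ distTo w' ψ = d}) := by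

  have hdist_mem : ∀ w : Fin n → Bool, ∃ a, ψ a ∧ hammingDist w a = distTo w ψ := by
    intro w
    have hne : {d | ∃ a, ψ a ∧ hammingDist w a = d}.Nonempty := by
      obtain ⟨a, ha⟩ := hψ; exact ⟨_, a, ha, rfl⟩
    exact Nat.sInf_mem hne
  have hdist_le : ∀ (w a : Fin n → Bool), ψ a → distTo w ψ ≤ hammingDist w a :=
    fun w a ha => Nat.sInf_le ⟨a, ha, rfl⟩
  have hG : ∀ (ℓ : ℕ) (w : Fin n → Bool), G ℓ ψ w ↔ distTo w ψ ≤ ℓ := by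
    intro ℓ w
    constructor
    · rintro ⟨w', hw', hle⟩; exact le_trans (hdist_le w w' hw') hle
    · intro h; obtain ⟨a, ha, hd⟩ := hdist_mem w; exact ⟨a, ha, hd ▸ h⟩
  set m := sInf {d | ∃ w', μ w' ∧ distTo w' ψ = d} with hm
  have hmS : {d | ∃ w', μ w' ∧ distTo w' ψ = d}.Nonempty := by
    obtain ⟨w, hw⟩ := hμ; exact ⟨_, w, hw, rfl⟩
  have hm_mem : ∃ w', μ w' ∧ distTo w' ψ = m := Nat.sInf_mem hmS
  have hm_le : ∀ w, μ w → m ≤ distTo w ψ := fun w hw => Nat.sInf_le ⟨w, hw, rfl⟩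
  have hzero : ∀ w, distTo w ψ = 0 ↔ ψ w := by
    intro w
    constructor
    · intro h
      obtain ⟨a, ha, hd⟩ := hdist_mem w
      rw [h] at hd
      rw [hammingDist_eq_zero.mp hd]; exact ha
    · intro h
      exact Nat.le_antisymm (by simpa using hdist_le w w h) (Nat.zero_le _)
  by_cases hc : ∃ w, ψ w ∧ μ w
  · have hrev : ∀ w, revise ψ μ w ↔ ψ w ∧ μ w := by
      intro w; simp [revise, hc]
    refine ⟨fun _ => hrev, fun w => ?_⟩
    have hm0 : m = 0 := by
      obtain ⟨w0, hψ0, hμ0⟩ := hc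
      have : distTo w0 ψ = 0 := (hzero w0).mpr hψ0
      exact Nat.le_antisymm (this ▸ hm_le w0 hμ0) (Nat.zero_le _)
    rw [hrev, hm0]
    constructor
    · rintro ⟨h1, h2⟩; exact ⟨h2, (hzero w).mpr h1⟩
    · rintro ⟨h1, h2⟩; exact ⟨(hzero w).mp h2, h1⟩
  · have hrev : ∀ w, revise ψ μ w ↔ G (revOrder ψ μ) ψ w ∧ μ w := by
      intro w; simp [revise, hc]
    have hm1 : 1 ≤ m := by
      rcases Nat.eq_zero_or_pos m with h0 | h1
      · exfalso
        obtain ⟨w0, hμ0, hd0⟩ := hm_mem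
        rw [h0] at hd0
        exact hc ⟨w0, (hzero w0).mp hd0, hμ0⟩
      · exact h1
    have hkm : revOrder ψ μ = m := by
      have hmem : m ∈ {ℓ | 1 ≤ ℓ ∧ ∃ w, G ℓ ψ w ∧ μ w} := by
        obtain ⟨w0, hμ0, hd0⟩ := hm_mem
        exact ⟨hm1, w0, (hG m w0).mpr (le_of_eq hd0), hμ0⟩
      refine Nat.le_antisymm (Nat.sInf_le hmem) ?_
      obtain ⟨_, w1, hG1, hμ1⟩ := Nat.sInf_mem ⟨m, hmem⟩
      exact le_trans (hm_le w1 hμ1) ((hG _ w1).mp hG1)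
    refine ⟨fun h => absurd h hc, fun w => ?_⟩
    rw [hrev, hkm, hG]
    constructor
    · rintro ⟨h1, h2⟩; exact ⟨h2, Nat.le_antisymm h1 (hm_le w h2)⟩
    · rintro ⟨h1, h2⟩; exact ⟨le_of_eq h2, h1⟩
end

section
/- Dalal revision satisfies postulates R5 and R6: for all satisfiable ψ, μ and any φ, (ψ ∘ μ) ∧ φ implies ψ ∘ (μ ∧ φ), and if (ψ ∘ μ) ∧ φ is satisfiable then ψ ∘ (μ ∧ φ) implies (ψ ∘ μ) ∧ φ. -/
open scoped Classical

lemma G_mono {n : ℕ} {ℓ m : ℕ} (h : ℓ ≤ m) {ψ : (Fin n → Bool) → Prop}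
    {w : Fin n → Bool} (hw : G ℓ ψ w) : G m ψ w := by
  obtain ⟨w', h1, h2⟩ := hw
  exact ⟨w', h1, h2.trans h⟩

theorem dalal_R5_R6 {n : ℕ} (ψ μ φ : (Fin n → Bool) → Prop)
    (hψ : ∃ w, ψ w) (hμ : ∃ w, μ w) (hμφ : ∃ w, μ w ∧ φ w) :
    (∀ w : Fin n → Bool, (revise ψ μ w ∧ φ w) → revise ψ (fun v => μ v ∧ φ v) w) ∧
      ((∃ w, revise ψ μ w ∧ φ w) →
        ∀ w : Fin n → Bool, revise ψ (fun v => μ v ∧ φ v) w → revise ψ μ w ∧ φ w) := by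
  classical
  by_cases hA : ∃ w, ψ w ∧ μ w ∧ φ w
  · have hB : ∃ w, ψ w ∧ μ w := ⟨hA.choose, hA.choose_spec.1, hA.choose_spec.2.1⟩
    have hA' : ∃ w, ψ w ∧ μ w ∧ φ w := hA
    constructor
    · intro w hw
      simp only [revise, if_pos hB] at hw
      simp only [revise, if_pos hA']
      exact ⟨hw.1.1, hw.1.2, hw.2⟩
    · intro _ w hw
      simp only [revise, if_pos hA'] at hw
      simp only [revise, if_pos hB]
      exact ⟨⟨hw.1, hw.2.1⟩, hw.2.2⟩
  · by_cases hB : ∃ w, ψ w ∧ μ w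
    · constructor
      · intro w hw
        simp only [revise, if_pos hB] at hw
        exact absurd ⟨w, hw.1.1, hw.1.2, hw.2⟩ hA
      · intro hx
        simp only [revise, if_pos hB] at hx
        obtain ⟨w, hw⟩ := hx
        exact absurd ⟨w, hw.1.1, hw.1.2, hw.2⟩ hA
    · -- both ψ∧μ and ψ∧μ∧φ unsatisfiable
      set k := revOrder ψ μ with hk
      set k' := revOrder ψ (fun v => μ v ∧ φ v) with hk'
      have hspec : k ∈ {ℓ | 1 ≤ ℓ ∧ ∃ w, G ℓ ψ w ∧ μ w} := by
        apply Nat.sInf_mem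
        obtain ⟨w, hw⟩ := hμ
        obtain ⟨w', hw'⟩ := hψ
        exact ⟨n + 1, Nat.le_add_left _ _,
          w, ⟨w', hw', (hammingDist_le_card_fintype).trans (by simp)⟩, hw⟩
      have hspec' : k' ∈ {ℓ | 1 ≤ ℓ ∧ ∃ w, G ℓ ψ w ∧ (μ w ∧ φ w)} := by
        apply Nat.sInf_mem
        obtain ⟨w, hw⟩ := hμφ
        obtain ⟨w', hw'⟩ := hψ
        exact ⟨n + 1, Nat.le_add_left _ _,
          w, ⟨w', hw', (hammingDist_le_card_fintype).trans (by simp)⟩, hw⟩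
      have hle2 : k ≤ k' := by
        apply Nat.sInf_le
        obtain ⟨w, hw⟩ := hspec'.2
        exact ⟨hspec'.1, w, hw.1, hw.2.1⟩
      constructor
      · intro w hw
        simp only [revise, if_neg hB] at hw
        simp only [revise, if_neg hA]
        exact ⟨G_mono hle2 hw.1.1, hw.1.2, hw.2⟩
      · intro hx w hw
        simp only [revise, if_neg hB] at hx
        obtain ⟨w0, hw0⟩ := hx
        have hle : k' ≤ k := Nat.sInf_le ⟨hspec.1, w0, hw0.1.1, hw0.1.2, hw0.2⟩
        simp only [revise, if_neg hA] at hw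
        simp only [revise, if_neg hB]
        exact ⟨⟨G_mono hle hw.1, hw.2.1⟩, hw.2.2⟩
end

section
/- The order of Dalal revision equals the minimum Hamming distance between models: if ψ and μ are satisfiable and ψ ∧ μ is unsatisfiable, then the least ℓ ≥ 1 such that G^ℓ(ψ) ∧ μ is satisfiable equals min{Δ(w,w') | w ∈ mod(ψ), w' ∈ mod(μ)}. -/
open scoped Classical

theorem revision_order_eq_min_dist {n : ℕ} (ψ μ : (Fin n → Bool) → Prop)
    (hψ : ∃ w, ψ w) (hμ : ∃ w, μ w) (hincons : ¬ ∃ w, ψ w ∧ μ w) :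
    sInf {ℓ | 1 ≤ ℓ ∧ ∃ w, G ℓ ψ w ∧ μ w} =
      sInf {d | ∃ w w', ψ w ∧ μ w' ∧ hammingDist w w' = d} := by
  set B : Set ℕ := {d | ∃ w w', ψ w ∧ μ w' ∧ hammingDist w w' = d} with hB
  obtain ⟨w₀, hw₀⟩ := hψ
  obtain ⟨w₁, hw₁⟩ := hμ
  have hBne : B.Nonempty := ⟨hammingDist w₀ w₁, w₀, w₁, hw₀, hw₁, rfl⟩
  have hmem : sInf B ∈ B := Nat.sInf_mem hBne
  obtain ⟨w, w', hw, hw', hd⟩ := hmem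
  have hpos : 1 ≤ sInf B := by
    rcases Nat.eq_zero_or_pos (sInf B) with h0 | h1
    · exfalso
      rw [h0] at hd
      have := hammingDist_eq_zero.mp hd
      exact hincons ⟨w, hw, this ▸ hw'⟩
    · exact h1
  have hInA : sInf B ∈ {ℓ | 1 ≤ ℓ ∧ ∃ w, G ℓ ψ w ∧ μ w} :=
    ⟨hpos, w', ⟨w, hw, by rw [hammingDist_comm]; exact hd.le⟩, hw'⟩
  apply le_antisymm
  · exact Nat.sInf_le hInA
  · have h2 : sInf {ℓ | 1 ≤ ℓ ∧ ∃ w, G ℓ ψ w ∧ μ w} ∈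
        {ℓ | 1 ≤ ℓ ∧ ∃ w, G ℓ ψ w ∧ μ w} := Nat.sInf_mem ⟨sInf B, hInA⟩
    obtain ⟨-, v, ⟨v', hv', hdist⟩, hv⟩ := h2
    calc sInf B ≤ hammingDist v' v := Nat.sInf_le ⟨v', v, hv', hv, rfl⟩
      _ ≤ _ := by rw [hammingDist_comm]; exact hdist
end
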